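/- arXiv:2101.01155 — 4 statements merged into one kernel-verified Lean document; each statement's English description precedes it below -/
import Mathlib

section
/- Non-cooperative game, case d0 = 0 (existence): suppose the two buses have the same starting position, x0 = y0. Then (v_max, v_max) is a pure Nash equilibrium: for every v ∈ Γ, u_x(x0, v, y0, v_max) ≤ u_x(x0, v_max, y0, v_max) and u_y(x0, v_max, y0, v) ≤ u_y(x0, v_max, y0, v_max). -/
/-- The reduction of a real number `r` modulo the circuit length `D`: the relative
position on the torus, `(r) mod D = r − D·⌊r/D⌋ ∈ [0, D)`. -/
noncomputable def modD (D r : ℝ) : ℝ := r - D * (⌊r / D⌋ : ℝ)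

/-- The directed (clockwise) distance from `x` to `y` on the circuit of length `D`. -/
noncomputable def dirX (D x y : ℝ) : ℝ := if x ≤ y then y - x else D + y - x

/-- The directed (clockwise) distance from `y` to `x` on the circuit of length `D`. -/
noncomputable def dirY (D x y : ℝ) : ℝ := dirX D y x

/-- Utility of player x: starting from `x0` and `y0`, driving at speeds `vx`, `vy`
for time `T`, with fare `p`, passenger rate `lam` and cost rate `c`. -/
noncomputable def uX (D p lam c T x0 y0 vx vy : ℝ) : ℝ :=
  if modD D (x0 + T * vx) ≠ modD D (y0 + T * vy) then
    p * lam * dirX D (modD D (x0 + T * vx)) (modD D (y0 + T * vy)) - c * T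
  else p * lam * (D / 2) - c * T

/-- Utility of player y, defined like `uX` with the directed distance `dirY`. -/
noncomputable def uY (D p lam c T x0 y0 vx vy : ℝ) : ℝ :=
  if modD D (x0 + T * vx) ≠ modD D (y0 + T * vy) then
    p * lam * dirY D (modD D (x0 + T * vx)) (modD D (y0 + T * vy)) - c * T
  else p * lam * (D / 2) - c * T

lemma modD_nonneg (D r : ℝ) (hD : 0 < D) : 0 ≤ modD D r := by
  have := Int.fract_nonneg (r / D)
  have h : modD D r = D * Int.fract (r / D) := by
    unfold modD Int.fract; field_simp
  rw [h]; positivity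

lemma modD_lt (D r : ℝ) (hD : 0 < D) : modD D r < D := by
  have h1 := Int.fract_lt_one (r / D)
  have h : modD D r = D * Int.fract (r / D) := by
    unfold modD Int.fract; field_simp
  rw [h]; nlinarith

lemma dirX_modD (D a b : ℝ) (hD : 0 < D) (h0 : 0 ≤ b - a) (h1 : b - a < D) :
    dirX D (modD D a) (modD D b) = b - a := by
  have hu0 := modD_nonneg D a hD
  have hu1 := modD_lt D a hD
  have hw0 := modD_nonneg D b hD
  have hw1 := modD_lt D b hD
  set k : ℤ := ⌊b / D⌋ - ⌊a / D⌋ with hk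
  have hkey : modD D b - modD D a = (b - a) - D * (k : ℝ) := by
    simp only [modD, hk]; push_cast; ring
  have hklt : (k : ℝ) < 2 := by nlinarith
  have hkgt : (-1 : ℝ) < (k : ℝ) := by nlinarith
  have hk2 : k < 2 := by exact_mod_cast hklt
  have hkm : -1 < k := by exact_mod_cast hkgt
  interval_cases k
  · norm_num at hkey
    have : modD D a ≤ modD D b := by linarith
    simp [dirX, this]; linarith
  · norm_num at hkey
    have : ¬ modD D a ≤ modD D b := by
      intro h; have : modD D a = modD D b ∧ b - a = D := by constructor <;> linarith
      linarith [this.2]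
    simp [dirX, this]; linarith

/-- Non-cooperative game, case d₀ = 0 (existence): if the two buses start at the same
position then (v_max, v_max) is a pure Nash equilibrium. -/
theorem same_start_vmax_vmax_is_nash
    (D p lam c T vmin vmax x0 y0 : ℝ)
    (hD : 0 < D) (hvmin : 0 < vmin) (hvv : vmin ≤ vmax) (hT : 0 < T)
    (hshort : T * vmax < D / 2)
    (hp : 0 ≤ p) (hlam : 0 < lam) (hc : 0 ≤ c)
    (hx0 : x0 ∈ Set.Ico 0 D) (hy0 : y0 ∈ Set.Ico 0 D)
    (hsame : x0 = y0) :
    ∀ v ∈ Set.Icc vmin vmax,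
      uX D p lam c T x0 y0 v vmax ≤ uX D p lam c T x0 y0 vmax vmax ∧
      uY D p lam c T x0 y0 vmax v ≤ uY D p lam c T x0 y0 vmax vmax := by
  intro v hv
  obtain ⟨hv1, hv2⟩ := hv
  subst hsame
  have heq : uX D p lam c T x0 x0 vmax vmax = p * lam * (D / 2) - c * T := by
    simp [uX]
  have heqY : uY D p lam c T x0 x0 vmax vmax = p * lam * (D / 2) - c * T := by
    simp [uY]
  set a : ℝ := x0 + T * v with ha
  set b : ℝ := x0 + T * vmax with hb
  have h0 : 0 ≤ b - a := by
    have : T * v ≤ T * vmax := by nlinarith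
    simp [ha, hb]; linarith
  have h1 : b - a < D := by
    have : b - a = T * vmax - T * v := by ring
    nlinarith
  have hdir : dirX D (modD D a) (modD D b) = b - a := dirX_modD D a b hD h0 h1
  have hle : p * lam * (b - a) ≤ p * lam * (D / 2) := by
    have hba : b - a ≤ D / 2 := by nlinarith
    have hpl : (0:ℝ) ≤ p * lam := by positivity
    exact mul_le_mul_of_nonneg_left hba hpl
  constructor
  · rw [heq]
    by_cases hne : modD D a ≠ modD D b
    · simp only [uX]
      rw [if_pos hne, hdir]
      linarith
    · simp only [uX]
      rw [if_neg hne]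
  · rw [heqY]
    by_cases hne : modD D b ≠ modD D a
    · simp only [uY, dirY]
      rw [if_pos hne, hdir]
      linarith
    · simp only [uY]
      rw [if_neg hne]
end

section
/- Cooperative game, case 0 < d0 and d0 + d < D/2: suppose v_min < v_max, 0 < d0 := d_x(x0, y0) ≤ d_y(x0, y0), and d0 + d < D/2, where d = T·(v_max − v_min) is the escape distance. Define the final separation s(v_x, v_y) := min(d_x(x_T, y_T), d_y(x_T, y_T)) if x_T ≠ y_T and s(v_x, v_y) := 0 if x_T = y_T. Then (v_min, v_max) is the unique maximizer of s over Γ × Γ, with maximal value d0 + d. -/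
/-- Final separation of the two buses: the minimal distance between the final
positions after driving at speeds `vx`, `vy` for time `T`, starting from `x0`, `y0`. -/
noncomputable def sep (D T x0 y0 vx vy : ℝ) : ℝ :=
  if modD D (x0 + T * vx) = modD D (y0 + T * vy) then 0
  else min (dirX D (modD D (x0 + T * vx)) (modD D (y0 + T * vy)))
           (dirY D (modD D (x0 + T * vx)) (modD D (y0 + T * vy)))

lemma modD_mem (D r : ℝ) (hD : 0 < D) : modD D r ∈ Set.Ico 0 D := by
  have h1 : (⌊r / D⌋ : ℝ) ≤ r / D := Int.floor_le _
  have h2 : r / D < ⌊r / D⌋ + 1 := Int.lt_floor_add_one _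
  have h3 : r / D * D = r := div_mul_cancel₀ r hD.ne'
  constructor <;> · simp only [modD]; nlinarith

lemma key_min (D x y c : ℝ) (m : ℤ) (hD : 0 < D)
    (hx0 : 0 ≤ x) (hx1 : x < D) (hy0 : 0 ≤ y) (hy1 : y < D)
    (hc1 : -(D/2) < c) (hc2 : c < D/2)
    (h : y - x = c + D * m) :
    (if x = y then (0:ℝ) else min (dirX D x y) (dirY D x y)) = |c| := by
  have hm : m = -1 ∨ m = 0 ∨ m = 1 := by
    have h1 : (-2 : ℝ) < (m : ℝ) := by nlinarith
    have h2 : (m : ℝ) < 2 := by nlinarith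
    have h1' : (-2 : ℤ) < m := by exact_mod_cast h1
    have h2' : m < 2 := by exact_mod_cast h2
    omega
  rcases hm with rfl | rfl | rfl <;> push_cast at h <;>
    rcases abs_cases c with ⟨he, hs⟩ | ⟨he, hs⟩ <;> rw [he] <;>
    simp only [dirX, dirY, min_def] <;> split_ifs <;> linarith

lemma sep_eq_abs (D T x0 y0 d0 vx vy : ℝ) (hD : 0 < D)
    (hx0 : x0 ∈ Set.Ico 0 D) (hy0 : y0 ∈ Set.Ico 0 D)
    (hd0 : d0 = dirX D x0 y0)
    (hc1 : -(D/2) < d0 + T * (vy - vx)) (hc2 : d0 + T * (vy - vx) < D/2) :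
    sep D T x0 y0 vx vy = |d0 + T * (vy - vx)| := by
  obtain ⟨m0, hm0⟩ : ∃ m0 : ℤ, y0 - x0 = d0 + D * m0 := by
    subst hd0
    simp only [dirX]
    split_ifs
    · exact ⟨0, by push_cast; ring⟩
    · exact ⟨-1, by push_cast; ring⟩
  have hX := modD_mem D (x0 + T * vx) hD
  have hY := modD_mem D (y0 + T * vy) hD
  have hdiff : modD D (y0 + T * vy) - modD D (x0 + T * vx)
      = (d0 + T * (vy - vx)) + D * ((m0 + ⌊(x0 + T * vx) / D⌋ - ⌊(y0 + T * vy) / D⌋ : ℤ) : ℝ) := by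
    simp only [modD]
    push_cast
    linarith [hm0]
  have := key_min D (modD D (x0 + T * vx)) (modD D (y0 + T * vy))
    (d0 + T * (vy - vx)) (m0 + ⌊(x0 + T * vx) / D⌋ - ⌊(y0 + T * vy) / D⌋) hD
    hX.1 hX.2 hY.1 hY.2 hc1 hc2 hdiff
  rw [sep]
  exact this

/-- Cooperative game, case 0 < d₀ and d₀ + d < D/2: (v_min, v_max) is the unique
maximizer of the final separation over Γ × Γ, with maximal value d₀ + d, where
d = T·(v_max − v_min) is the escape distance and d₀ = d_x(x₀, y₀). -/
theorem coop_small_distance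
    (D T vmin vmax x0 y0 d0 d : ℝ)
    (hD : 0 < D) (hvmin : 0 < vmin) (hvv : vmin < vmax) (hT : 0 < T)
    (hshort : T * vmax < D / 2)
    (hx0 : x0 ∈ Set.Ico 0 D) (hy0 : y0 ∈ Set.Ico 0 D)
    (hd0 : d0 = dirX D x0 y0) (hd : d = T * (vmax - vmin))
    (hd0pos : 0 < d0) (hd0le : d0 ≤ dirY D x0 y0)
    (hsum : d0 + d < D / 2) :
    (∀ vx ∈ Set.Icc vmin vmax, ∀ vy ∈ Set.Icc vmin vmax,
      sep D T x0 y0 vx vy ≤ d0 + d) ∧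
    sep D T x0 y0 vmin vmax = d0 + d ∧
    (∀ vx ∈ Set.Icc vmin vmax, ∀ vy ∈ Set.Icc vmin vmax,
      sep D T x0 y0 vx vy = d0 + d → vx = vmin ∧ vy = vmax) := by
  have hdpos : 0 < d := by
    rw [hd]; exact mul_pos hT (by linarith)
  have hrange : ∀ vx ∈ Set.Icc vmin vmax, ∀ vy ∈ Set.Icc vmin vmax,
      d0 - d ≤ d0 + T * (vy - vx) ∧ d0 + T * (vy - vx) ≤ d0 + d := by
    intro vx hvx vy hvy
    have h1 : T * (vy - vx) ≤ T * (vmax - vmin) := by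
      apply mul_le_mul_of_nonneg_left _ hT.le
      linarith [hvx.1, hvy.2]
    have h2 : T * (vmin - vmax) ≤ T * (vy - vx) := by
      apply mul_le_mul_of_nonneg_left _ hT.le
      linarith [hvx.2, hvy.1]
    constructor
    · have : T * (vmin - vmax) = -(d) := by rw [hd]; ring
      linarith
    · linarith [hd ▸ h1]
  have hsep : ∀ vx ∈ Set.Icc vmin vmax, ∀ vy ∈ Set.Icc vmin vmax,
      sep D T x0 y0 vx vy = |d0 + T * (vy - vx)| := by
    intro vx hvx vy hvy
    obtain ⟨hl, hr⟩ := hrange vx hvx vy hvy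
    exact sep_eq_abs D T x0 y0 d0 vx vy hD hx0 hy0 hd0
      (by linarith) (by linarith)
  refine ⟨?_, ?_, ?_⟩
  · intro vx hvx vy hvy
    rw [hsep vx hvx vy hvy]
    obtain ⟨hl, hr⟩ := hrange vx hvx vy hvy
    rw [abs_le]
    constructor <;> linarith
  · have hmem1 : vmin ∈ Set.Icc vmin vmax := ⟨le_refl _, hvv.le⟩
    have hmem2 : vmax ∈ Set.Icc vmin vmax := ⟨hvv.le, le_refl _⟩
    rw [hsep vmin hmem1 vmax hmem2]
    rw [abs_of_pos (by rw [← hd]; linarith), hd]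
  · intro vx hvx vy hvy heq
    rw [hsep vx hvx vy hvy] at heq
    obtain ⟨hl, hr⟩ := hrange vx hvx vy hvy
    have hc : d0 + T * (vy - vx) = d0 + d := by
      rcases abs_cases (d0 + T * (vy - vx)) with ⟨he, _⟩ | ⟨he, _⟩ <;>
        rw [he] at heq <;> linarith
    have hvel : vy - vx = vmax - vmin := by
      have : T * (vy - vx) = T * (vmax - vmin) := by rw [← hd]; linarith
      exact mul_left_cancel₀ hT.ne' this
    exact ⟨by linarith [hvx.1, hvy.2], by linarith [hvx.1, hvy.2]⟩
end

section
/- Cooperative game, case d0 + d > D/2: suppose v_min < v_max, d0 := d_x(x0, y0) ≤ d_y(x0, y0) (so d0 ≤ D/2), and d0 + d > D/2, where d = T·(v_max − v_min) is the escape distance. Define the final separation s(v_x, v_y) := min(d_x(x_T, y_T), d_y(x_T, y_T)) if x_T ≠ y_T and s(v_x, v_y) := 0 if x_T = y_T. Then: (i) there exists a pair (v_x, v_y) ∈ Γ × Γ with d0 + T·(v_y − v_x) = D/2; (ii) s(v_x, v_y) ≤ D/2 for all (v_x, v_y) ∈ Γ × Γ; and (iii) s(v_x, v_y) = D/2 if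 and only if d0 + T·(v_y − v_x) = D/2, so the maximizers of s are exactly the pairs with d0 + T·(v_y − v_x) = D/2. -/
open Set

namespace AddCircle

theorem norm_coe_abs (p x : ℝ) : ‖((|x| : ℝ) : AddCircle p)‖ = ‖(x : AddCircle p)‖ := by
  rcases abs_choice x with h | h <;> rw [h]
  rw [coe_neg, norm_neg]

theorem norm_coe_eq_min_abs {p x : ℝ} (hx : |x| ≤ p) :
    ‖(x : AddCircle p)‖ = min |x| (p - |x|) := by
  obtain rfl | hp := (abs_nonneg x).trans hx |>.eq_or_lt
  · simp [abs_nonpos_iff.1 hx]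
  rw [← norm_coe_abs]
  have hhalf : |p| / 2 = p / 2 := by rw [abs_of_pos hp]
  rcases le_total |x| (p / 2) with hx2 | hx2
  · rw [min_eq_left (by linarith), (norm_coe_eq_abs_iff p hp.ne').2 (by rwa [abs_abs, hhalf]),
      abs_abs]
  · have hshift : ((|x| : ℝ) : AddCircle p) = ((|x| - p : ℝ) : AddCircle p) := by
      rw [coe_sub, coe_period, sub_zero]
    have hdist : |(|x| - p)| = p - |x| := by rw [abs_sub_comm, abs_of_nonneg (by linarith)]
    rw [min_eq_right (by linarith), hshift,
      (norm_coe_eq_abs_iff p hp.ne').2 (by rw [hdist, hhalf]; linarith), hdist]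

theorem norm_coe_eq_half_period_iff {p x : ℝ} (hx : x ∈ Ioo (-(p / 2)) p) :
    ‖(x : AddCircle p)‖ = p / 2 ↔ x = p / 2 := by
  have hp : 0 < p := by linarith [hx.1, hx.2]
  rw [norm_coe_eq_min_abs (abs_le.2 ⟨by linarith [hx.1], hx.2.le⟩)]
  constructor
  · intro h
    have habs : |x| = p / 2 := by
      rcases min_eq_iff.1 h with ⟨h', -⟩ | ⟨h', -⟩ <;> linarith
    rcases (abs_eq (by positivity)).1 habs with h' | h'
    · exact h'
    · exact absurd h' (ne_of_gt hx.1)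
  · rintro rfl
    rw [abs_of_pos (by positivity), show p - p / 2 = p / 2 by ring, min_self]

end AddCircle

theorem modD_eq_toIcoMod {D : ℝ} (hD : 0 < D) (r : ℝ) : modD D r = toIcoMod hD 0 r := by
  rw [toIcoMod_eq_fract_mul, Int.fract, sub_mul, div_mul_cancel₀ r hD.ne', modD, mul_comm]

theorem modD_mem_Ico {D : ℝ} (hD : 0 < D) (r : ℝ) : modD D r ∈ Ico 0 D := by
  simpa [modD_eq_toIcoMod hD] using toIcoMod_mem_Ico' hD r

theorem coe_modD (D r : ℝ) : ((modD D r : ℝ) : AddCircle D) = r := by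
  rw [modD, AddCircle.coe_sub, mul_comm, ← zsmul_eq_mul, AddCircle.coe_zsmul,
    AddCircle.coe_period, smul_zero, sub_zero]

theorem coe_dirX (D x y : ℝ) : ((dirX D x y : ℝ) : AddCircle D) = (y - x : ℝ) := by
  unfold dirX
  split_ifs
  · rfl
  · rw [add_sub_assoc, add_comm, AddCircle.coe_add_period]

theorem dirX_add_dirY_le {D : ℝ} (hD : 0 ≤ D) (x y : ℝ) : dirX D x y + dirY D x y ≤ D := by
  unfold dirY dirX
  split_ifs <;> linarith

theorem min_dirX_dirY_eq_norm {D x y : ℝ} (hx : x ∈ Ico 0 D) (hy : y ∈ Ico 0 D) :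
    min (dirX D x y) (dirY D x y) = ‖((y - x : ℝ) : AddCircle D)‖ := by
  have hxy : |y - x| ≤ D := abs_le.2 ⟨by linarith [hx.2, hy.1], by linarith [hx.1, hy.2]⟩
  rw [AddCircle.norm_coe_eq_min_abs hxy]
  unfold dirY dirX
  split_ifs with h1 h2 h2
  · simp [le_antisymm h1 h2, hx.1.trans_lt hx.2 |>.le]
  · rw [abs_of_nonneg (sub_nonneg.2 h1), sub_sub_eq_add_sub]
  · rw [abs_of_nonpos (by linarith), neg_sub, sub_sub_eq_add_sub, min_comm]
  · exact absurd (not_le.1 h1).le h2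

theorem sep_eq_norm {D : ℝ} (hD : 0 < D) (T x0 y0 vx vy : ℝ) :
    sep D T x0 y0 vx vy = ‖((dirX D x0 y0 + T * (vy - vx) : ℝ) : AddCircle D)‖ := by
  have hcoe : ((dirX D x0 y0 + T * (vy - vx) : ℝ) : AddCircle D) =
      ((modD D (y0 + T * vy) - modD D (x0 + T * vx) : ℝ) : AddCircle D) := by
    simp only [mul_sub, AddCircle.coe_add, AddCircle.coe_sub, coe_dirX, coe_modD]
    abel
  rw [hcoe, ← min_dirX_dirY_eq_norm (modD_mem_Ico hD _) (modD_mem_Ico hD _), sep]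
  split_ifs with h
  · simp [h, dirY, dirX]
  · rfl

theorem coop_large_distance_general
    (D T vmin vmax x0 y0 d0 d : ℝ)
    (hD : 0 < D) (hvmin : 0 < vmin) (hvv : vmin < vmax) (hT : 0 < T)
    (hshort : T * vmax < D / 2)
    (hd0 : d0 = dirX D x0 y0) (hd : d = T * (vmax - vmin))
    (hd0le : d0 ≤ dirY D x0 y0)
    (hsum : D / 2 < d0 + d) :
    (∃ vx ∈ Set.Icc vmin vmax, ∃ vy ∈ Set.Icc vmin vmax,
      d0 + T * (vy - vx) = D / 2) ∧
    (∀ vx ∈ Set.Icc vmin vmax, ∀ vy ∈ Set.Icc vmin vmax,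
      sep D T x0 y0 vx vy ≤ D / 2) ∧
    (∀ vx ∈ Set.Icc vmin vmax, ∀ vy ∈ Set.Icc vmin vmax,
      (sep D T x0 y0 vx vy = D / 2 ↔ d0 + T * (vy - vx) = D / 2)) := by
  have hd0half : d0 ≤ D / 2 := by linarith [dirX_add_dirY_le hD.le x0 y0]
  have hdhalf : d < D / 2 := by linarith [mul_pos hT hvmin, mul_sub T vmax vmin]
  have hsep : ∀ vx vy, sep D T x0 y0 vx vy = ‖((d0 + T * (vy - vx) : ℝ) : AddCircle D)‖ :=
    fun vx vy => hd0 ▸ sep_eq_norm hD T x0 y0 vx vy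
  refine ⟨⟨vmin, ⟨le_rfl, hvv.le⟩, vmin + (D / 2 - d0) / T, ⟨?_, ?_⟩, ?_⟩, ?_, ?_⟩
  · linarith [div_nonneg (sub_nonneg.2 hd0half) hT.le]
  · have hstep : (D / 2 - d0) / T ≤ vmax - vmin :=
      (div_le_iff₀ hT).2 (by linarith [mul_comm T (vmax - vmin)])
    linarith
  · field_simp
    ring
  · intro vx _ vy _
    simpa [hsep, abs_of_pos hD] using AddCircle.norm_le_half_period D hD.ne'
  · rintro vx ⟨hvx1, hvx2⟩ vy ⟨hvy1, hvy2⟩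
    have hdrift : |T * (vy - vx)| ≤ d := by
      rw [hd, abs_mul, abs_of_pos hT]
      exact mul_le_mul_of_nonneg_left (abs_sub_le_iff.2 ⟨by linarith, by linarith⟩) hT.le
    obtain ⟨hlow, hhigh⟩ := abs_le.1 hdrift
    rw [hsep, AddCircle.norm_coe_eq_half_period_iff]
    constructor <;> linarith

/-- Cooperative game, case d₀ + d > D/2: there is a feasible pair of speeds reaching
the diametric separation D/2, the final separation never exceeds D/2, and it equals
D/2 exactly when d₀ + T·(v_y − v_x) = D/2. -/
theorem coop_large_distance
    (D T vmin vmax x0 y0 d0 d : ℝ)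
    (hD : 0 < D) (hvmin : 0 < vmin) (hvv : vmin < vmax) (hT : 0 < T)
    (hshort : T * vmax < D / 2)
    (hx0 : x0 ∈ Set.Ico 0 D) (hy0 : y0 ∈ Set.Ico 0 D)
    (hd0 : d0 = dirX D x0 y0) (hd : d = T * (vmax - vmin))
    (hd0le : d0 ≤ dirY D x0 y0)
    (hsum : D / 2 < d0 + d) :
    (∃ vx ∈ Set.Icc vmin vmax, ∃ vy ∈ Set.Icc vmin vmax,
      d0 + T * (vy - vx) = D / 2) ∧
    (∀ vx ∈ Set.Icc vmin vmax, ∀ vy ∈ Set.Icc vmin vmax,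
      sep D T x0 y0 vx vy ≤ D / 2) ∧
    (∀ vx ∈ Set.Icc vmin vmax, ∀ vy ∈ Set.Icc vmin vmax,
      (sep D T x0 y0 vx vy = D / 2 ↔ d0 + T * (vy - vx) = D / 2)) :=
  coop_large_distance_general D T vmin vmax x0 y0 d0 d hD hvmin hvv hT hshort hd0 hd hd0le hsum
end

section
/- Best reply of player y when she cannot be caught (case b of Theorem 2, first branch of B_y): assume pλ > 0, 0 < d0 := d_x(x0, y0) < d < d_y(x0, y0), where d = T·(v_max − v_min) and v_min < v_max. Let v ∈ Γ with v < v_min + d0/T. Then for every w ∈ Γ, u_y(x0, v, y0, w) ≤ u_y(x0, v, y0, v_min), with equality if and only if w = v_min; i.e., v_min is the unique best reply of player y to player x driving at speed v. -/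
lemma modD_self (D r : ℝ) (hD : 0 < D) (h0 : 0 ≤ r) (h1 : r < D) : modD D r = r := by
  unfold modD
  have hfl : ⌊r / D⌋ = 0 := by
    rw [Int.floor_eq_zero_iff]
    constructor
    · positivity
    · rw [div_lt_one hD]; exact h1
  rw [hfl]; push_cast; ring

lemma modD_add_int (D r : ℝ) (hD : 0 < D) (k : ℤ) : modD D (r + D * k) = modD D r := by
  unfold modD
  have h : (r + D * k) / D = r / D + k := by field_simp
  rw [h, Int.floor_add_intCast]; push_cast; ring

lemma dirX_eq (D X Y : ℝ) (hD : 0 < D) (hX0 : 0 ≤ X) (hXD : X < D)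
    (hY0 : 0 ≤ Y) (hYD : Y < D) : dirX D X Y = modD D (Y - X) := by
  unfold dirX
  by_cases h : X ≤ Y
  · rw [if_pos h, modD_self D _ hD (by linarith) (by linarith)]
  · rw [if_neg h]
    push_neg at h
    have hk : Y - X = (D + Y - X) + D * ((-1 : ℤ) : ℝ) := by push_cast; ring
    rw [hk, modD_add_int D _ hD, modD_self D _ hD (by linarith) (by linarith)]

lemma modD_sub_mod (D a b : ℝ) (hD : 0 < D) :
    modD D (modD D b - modD D a) = modD D (b - a) := by
  have hk : b - a = (modD D b - modD D a) + D * ((⌊b / D⌋ - ⌊a / D⌋ : ℤ) : ℝ) := by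
    unfold modD; push_cast; ring
  rw [hk, modD_add_int D _ hD]

/-- Best reply of player y when she cannot be caught: if player x drives slower than
v_min + d₀/T, then v_min is the unique best reply of player y. -/
theorem best_reply_y_first_branch
    (D p lam c T vmin vmax x0 y0 d0 d v : ℝ)
    (hD : 0 < D) (hvmin : 0 < vmin) (hvv : vmin < vmax) (hT : 0 < T)
    (hshort : T * vmax < D / 2)
    (hp : 0 ≤ p) (hlam : 0 < lam) (hc : 0 ≤ c) (hplam : 0 < p * lam)
    (hx0 : x0 ∈ Set.Ico 0 D) (hy0 : y0 ∈ Set.Ico 0 D)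
    (hd0 : d0 = dirX D x0 y0) (hd : d = T * (vmax - vmin))
    (hd0pos : 0 < d0) (hd0d : d0 < d) (hdy : d < dirY D x0 y0)
    (hv : v ∈ Set.Icc vmin vmax) (hvslow : v < vmin + d0 / T) :
    ∀ w ∈ Set.Icc vmin vmax,
      uY D p lam c T x0 y0 v w ≤ uY D p lam c T x0 y0 v vmin ∧
      (uY D p lam c T x0 y0 v w = uY D p lam c T x0 y0 v vmin ↔ w = vmin) := by
  have hvT : T * (v - vmin) < d0 := by
    have : (v - vmin) < d0 / T := by linarith
    calc T * (v - vmin) < T * (d0 / T) := by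
          rcases lt_or_ge (v - vmin) (d0 / T) with h | h
          · exact mul_lt_mul_of_pos_left this hT
          · linarith
      _ = d0 := by field_simp
  -- d0 as a mod
  have hd0mod : modD D (y0 - x0) = d0 := by
    rw [hd0, dirX_eq D x0 y0 hD hx0.1 hx0.2 hy0.1 hy0.2]
  -- general formula for uY at speed w
  have key : ∀ w, vmin ≤ w → w ≤ vmax →
      uY D p lam c T x0 y0 v w = p * lam * (D - (d0 + T * (w - v))) - c * T := by
    intro w hw1 hw2
    have hs0 : 0 < d0 + T * (w - v) := by nlinarith
    have hsD : d0 + T * (w - v) < D := by nlinarith [hv.1, hv.2]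
    have hdirX : dirX D (modD D (x0 + T * v)) (modD D (y0 + T * w))
        = d0 + T * (w - v) := by
      rw [dirX_eq D _ _ hD (modD_nonneg D _ hD) (modD_lt D _ hD)
        (modD_nonneg D _ hD) (modD_lt D _ hD), modD_sub_mod D _ _ hD]
      have h1 : (y0 + T * w) - (x0 + T * v) = (y0 - x0) + T * (w - v) := by ring
      have h2 : (y0 - x0) + T * (w - v)
          = (d0 + T * (w - v)) + D * ((⌊(y0 - x0) / D⌋ : ℤ) : ℝ) := by
        have : y0 - x0 = d0 + D * ((⌊(y0 - x0) / D⌋ : ℤ) : ℝ) := by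
          rw [← hd0mod]; unfold modD; ring
        linarith [this]
      rw [h1, h2, modD_add_int D _ hD, modD_self D _ hD (le_of_lt hs0) hsD]
    have hne : modD D (x0 + T * v) ≠ modD D (y0 + T * w) := by
      intro h
      rw [h] at hdirX
      unfold dirX at hdirX
      rw [if_pos le_rfl] at hdirX
      linarith
    have hdirY : dirY D (modD D (x0 + T * v)) (modD D (y0 + T * w))
        = D - (d0 + T * (w - v)) := by
      unfold dirY
      rw [dirX_eq D _ _ hD (modD_nonneg D _ hD) (modD_lt D _ hD)
        (modD_nonneg D _ hD) (modD_lt D _ hD), modD_sub_mod D _ _ hD]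
      have h2 : (x0 + T * v) - (y0 + T * w)
          = (D - (d0 + T * (w - v))) + D * ((-1 - (⌊(y0 - x0) / D⌋ : ℤ) : ℤ) : ℝ) := by
        have : y0 - x0 = d0 + D * ((⌊(y0 - x0) / D⌋ : ℤ) : ℝ) := by
          rw [← hd0mod]; unfold modD; ring
        push_cast
        linarith [this]
      rw [h2, modD_add_int D _ hD,
        modD_self D _ hD (by linarith) (by linarith)]
    unfold uY
    rw [if_pos hne, hdirY]
  intro w hw
  rw [key w hw.1 hw.2, key vmin le_rfl (le_of_lt hvv)]
  constructor
  · nlinarith [mul_nonneg hplam.le (mul_nonneg hT.le (sub_nonneg.mpr hw.1))]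
  · constructor
    · intro h
      have : p * lam * (T * (w - vmin)) = 0 := by linear_combination -h
      have h2 : T * (w - vmin) = 0 := by
        rcases mul_eq_zero.mp this with h' | h'
        · exact absurd h' (ne_of_gt hplam)
        · exact h'
      have : w - vmin = 0 := by
        rcases mul_eq_zero.mp h2 with h' | h'
        · exact absurd h' (ne_of_gt hT)
        · exact h'
      linarith
    · intro h; rw [h]
end
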